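/- Let f be a function in the incidence algebra over a finite poset P with f(γ, γ) ≠ 0 for all γ ∈ P, and let α ≤ β be arbitrary elements of P. Then the inverse of f in the incidence algebra satisfies f^{−1}(α, β) = Σ (−1)^{s−1} · [f(γ_1, γ_2) f(γ_2, γ_3) ··· f(γ_{s−1}, γ_s)] / [f(γ_1, γ_1) f(γ_2, γ_2) ··· f(γ_s, γ_s)], where the sum is over all chains α = γ_1 < γ_2 < … < γ_s = β in the interval [α, β] beginning at α and ending at β. -/

import Mathlib

open MeasureTheory ProbabilityTheory Finset

namespace Kassign

variable {m n : ℕ}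

/-- A `k`-assignment: `k` positions in an `m × n` matrix, no two sharing a row or a column. -/
def IsAssignment (k : ℕ) (A : Finset (Fin m × Fin n)) : Prop :=
  A.card = k ∧ ∀ p ∈ A, ∀ q ∈ A, p ≠ q → p.1 ≠ q.1 ∧ p.2 ≠ q.2

/-- A cover: a set of rows together with a set of columns. -/
structure Cover (m n : ℕ) where
  rows : Finset (Fin m)
  cols : Finset (Fin n)
deriving DecidableEq

namespace Cover

/-- The size of a cover: the number of rows and columns in it. -/
def size (α : Cover m n) : ℕ := α.rows.card + α.cols.card

/-- `α` covers `Z` if every position of `Z` lies in a row or a column of `α`. -/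
def Covers (α : Cover m n) (Z : Finset (Fin m × Fin n)) : Prop :=
  ∀ p ∈ Z, p.1 ∈ α.rows ∨ p.2 ∈ α.cols

/-- The rectangle of a cover: the positions lying in no row or column of the cover. -/
def rect (α : Cover m n) : Finset (Fin m × Fin n) := α.rowsᶜ ×ˢ α.colsᶜ

/-- The partial order on critical rectangles (modelled by their covers):
`R(α) ≤ R(β)` iff `cols α ⊆ cols β` and `rows α ⊇ rows β`. -/
instance : PartialOrder (Cover m n) where
  le α β := α.cols ⊆ β.cols ∧ β.rows ⊆ α.rows
  le_refl _ := ⟨subset_rfl, subset_rfl⟩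
  le_trans _ _ _ h h' := ⟨h.1.trans h'.1, h'.2.trans h.2⟩
  le_antisymm := by
    rintro ⟨r1, c1⟩ ⟨r2, c2⟩ h h'
    obtain ⟨h1, h2⟩ := h
    obtain ⟨h1', h2'⟩ := h'
    simp only [Cover.mk.injEq]
    exact ⟨Finset.Subset.antisymm h2' h2, Finset.Subset.antisymm h1 h1'⟩

instance : Fintype (Cover m n) :=
  Fintype.ofEquiv (Finset (Fin m) × Finset (Fin n))
    { toFun := fun p => ⟨p.1, p.2⟩
      invFun := fun α => (α.rows, α.cols)
      left_inv := fun _ => rfl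
      right_inv := fun _ => rfl }

instance : DecidableRel (α := Cover m n) (· ≤ ·) :=
  fun a b => decidable_of_iff (a.cols ⊆ b.cols ∧ b.rows ⊆ a.rows) Iff.rfl

instance : DecidableRel (α := Cover m n) (· < ·) :=
  fun a b => decidable_of_iff (a ≤ b ∧ ¬ b ≤ a) lt_iff_le_not_ge.symm

instance (Z : Finset (Fin m × Fin n)) : DecidablePred (fun α : Cover m n => α.Covers Z) :=
  fun α => decidable_of_iff (∀ p ∈ Z, p.1 ∈ α.rows ∨ p.2 ∈ α.cols) Iff.rfl

end Cover

instance {s : ℕ} (c : Fin s → Cover m n) : Decidable (StrictMono c) :=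
  decidable_of_iff (∀ a b : Fin s, a < b → c a < c b) Iff.rfl

/-- `Q_{k,Z}` (for `j = k - 1`): the poset of critical rectangles, modelled by the
`j`-covers of `Z`. -/
def criticalCovers (j : ℕ) (Z : Finset (Fin m × Fin n)) : Finset (Cover m n) :=
  Finset.univ.filter fun α => α.Covers Z ∧ α.size = j

/-- The rate `I(R)` of a set of positions: the sum of the rates of its entries. -/
def rate (lam : Fin m × Fin n → ℝ) (R : Finset (Fin m × Fin n)) : ℝ := ∑ p ∈ R, lam p

/-- `Z` contains `j` zeros in independent position. -/
def HasIndepZeros (j : ℕ) (Z : Finset (Fin m × Fin n)) : Prop :=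
  ∃ A ⊆ Z, IsAssignment j A

variable {Ω : Type*} [MeasurableSpace Ω]

/-- `Y` is an exponential random variable with rate `l` under `P`:
`P(Y > t) = e^{-l t}` for all `t ≥ 0`. -/
def IsExponential (P : Measure Ω) (Y : Ω → ℝ) (l : ℝ) : Prop :=
  Measurable Y ∧ ∀ t : ℝ, 0 ≤ t → P {ω | t < Y ω} = ENNReal.ofReal (Real.exp (-(l * t)))

/-- The random matrix model: entries at positions of `Z` are identically `0`; the other
entries are mutually independent exponential random variables, the entry at `p` having
positive rate `lam p`. -/
def MatrixModel (P : Measure Ω) (Z : Finset (Fin m × Fin n))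
    (lam : Fin m × Fin n → ℝ) (X : Fin m × Fin n → Ω → ℝ) : Prop :=
  (∀ p ∈ Z, ∀ ω, X p ω = 0) ∧
  (∀ p ∉ Z, 0 < lam p ∧ IsExponential P (X p) (lam p)) ∧
  iIndepFun (fun p : {p : Fin m × Fin n // p ∉ Z} => X p.1) P

/-- `min_k(M)`: the value of an optimal `k`-assignment. -/
noncomputable def minAssign (k : ℕ) (X : Fin m × Fin n → Ω → ℝ) (ω : Ω) : ℝ :=
  sInf {v | ∃ A : Finset (Fin m × Fin n), IsAssignment k A ∧ v = ∑ p ∈ A, X p ω}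

/-- `min_k(M^r)`: the value of an optimal `k`-assignment avoiding row `r`
(i.e. in the matrix with row `r` deleted). -/
noncomputable def minAssignAvoid (k : ℕ) (r : Fin m) (X : Fin m × Fin n → Ω → ℝ) (ω : Ω) : ℝ :=
  sInf {v | ∃ A : Finset (Fin m × Fin n), IsAssignment k A ∧ (∀ p ∈ A, p.1 ≠ r) ∧
    v = ∑ p ∈ A, X p ω}

/-- The Laplace transform `L(Y, t) = E[e^{-tY}]`. -/
noncomputable def laplace (P : Measure Ω) (Y : Ω → ℝ) (t : ℝ) : ℝ :=
  ∫ ω, Real.exp (-t * Y ω) ∂P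

/-- `φ(R, t) = I(R) / (I(R) + t)`, the Laplace transform of an exponential variable of
rate `I(R)`. -/
noncomputable def phi (lam : Fin m × Fin n → ℝ) (R : Cover m n) (t : ℝ) : ℝ :=
  rate lam R.rect / (rate lam R.rect + t)

/-- `g` is the (two-sided) inverse of `f` in the incidence algebra of the poset `S`. -/
def IsIncidenceInverse {C : Type*} [PartialOrder C] [DecidableEq C]
    [DecidableRel (α := C) (· ≤ ·)] (S : Finset C) (f g : C → C → ℝ) : Prop :=
  (∀ a ∈ S, ∀ b ∈ S,
    (∑ c ∈ S.filter fun c => a ≤ c ∧ c ≤ b, f a c * g c b) = if a = b then 1 else 0) ∧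
  (∀ a ∈ S, ∀ b ∈ S,
    (∑ c ∈ S.filter fun c => a ≤ c ∧ c ≤ b, g a c * f c b) = if a = b then 1 else 0)

/-- The column cover `γ` consisting of the first `j` columns (and no rows). -/
def colCover (m n j : ℕ) : Cover m n :=
  ⟨∅, Finset.univ.filter fun c : Fin n => (c : ℕ) < j⟩

/-- `K_i`: the intersection of the rectangle of `α` with row `i`. -/
def rowPart (α : Cover m n) (i : Fin m) : Finset (Fin m × Fin n) :=
  α.rect.filter fun p => p.1 = i


instance {C : Type*} [Preorder C] [DecidableRel (α := C) (· < ·)] {s : ℕ}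
    (c : Fin s → C) : Decidable (StrictMono c) :=
  decidable_of_iff (∀ a b : Fin s, a < b → c a < c b) Iff.rfl

section Aux

variable {C : Type*} [Fintype C] [PartialOrder C] [DecidableEq C]
  [DecidableRel (α := C) (· ≤ ·)] [DecidableRel (α := C) (· < ·)]

noncomputable def chainTerm (f : C → C → ℝ) (s : ℕ) (c : Fin (s + 1) → C) : ℝ :=
  (-1 : ℝ) ^ s * (∏ i : Fin s, f (c i.castSucc) (c i.succ)) / ∏ i, f (c i) (c i)

noncomputable def chainSum (f : C → C → ℝ) (α β : C) : ℝ :=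
  ∑ s ∈ Finset.range (Fintype.card C), ∑ c : Fin (s + 1) → C,
    if StrictMono c ∧ c 0 = α ∧ c (Fin.last s) = β then chainTerm f s c else 0

lemma strictMono_cons_iff {n : ℕ} {x : C} {c : Fin (n + 1) → C} :
    StrictMono (Fin.cons x c : Fin (n + 2) → C) ↔ x < c 0 ∧ StrictMono c := by
  rw [Fin.strictMono_iff_lt_succ, Fin.strictMono_iff_lt_succ]
  constructor
  · intro h
    refine ⟨by simpa using h 0, fun i => ?_⟩
    have := h i.succ
    simpa [← Fin.succ_castSucc] using this
  · rintro ⟨h0, h⟩ i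
    induction i using Fin.cases with
    | zero => simpa using h0
    | succ j => simpa [← Fin.succ_castSucc] using h j

lemma chainTerm_cons (f : C → C → ℝ) {t : ℕ} (x : C) (c : Fin (t + 1) → C) :
    chainTerm f (t + 1) (Fin.cons x c) = -(f x (c 0) / f x x) * chainTerm f t c := by
  unfold chainTerm
  rw [Fin.prod_univ_succ (f := fun i : Fin (t + 1) =>
        f ((Fin.cons x c : Fin (t+2) → C) i.castSucc) ((Fin.cons x c : Fin (t+2) → C) i.succ)),
      Fin.prod_univ_succ (f := fun i : Fin (t + 2) =>
        f ((Fin.cons x c : Fin (t+2) → C) i) ((Fin.cons x c : Fin (t+2) → C) i))]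
  simp only [Fin.cons_zero, Fin.cons_succ, Fin.castSucc_zero, ← Fin.succ_castSucc]
  ring

end Aux

section Aux2
set_option linter.unusedSectionVars false

variable {C : Type*} [Fintype C] [PartialOrder C] [DecidableEq C]
  [DecidableRel (α := C) (· ≤ ·)] [DecidableRel (α := C) (· < ·)]

lemma chainSum_diag (f : C → C → ℝ) (α : C) : chainSum f α α = 1 / f α α := by
  have hN : Fintype.card C = (Fintype.card C - 1) + 1 := by
    have : 0 < Fintype.card C := Fintype.card_pos_iff.mpr ⟨α⟩
    omega
  unfold chainSum
  rw [hN, Finset.sum_range_succ']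
  have h1 : ∀ t ∈ Finset.range (Fintype.card C - 1),
      (∑ c : Fin (t + 1 + 1) → C,
        if StrictMono c ∧ c 0 = α ∧ c (Fin.last (t + 1)) = α then chainTerm f (t + 1) c
        else 0) = 0 := by
    intro t _
    refine Finset.sum_eq_zero fun c _ => ?_
    rw [if_neg]
    rintro ⟨hsm, h0, hl⟩
    have : c 0 < c (Fin.last (t + 1)) := hsm (by
      simp [Fin.lt_def, Fin.last])
    rw [h0, hl] at this
    exact lt_irrefl _ this
  rw [Finset.sum_congr rfl h1, Finset.sum_const_zero, zero_add]
  rw [← (Equiv.funUnique (Fin 1) C).symm.sum_comp]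
  simp only [Equiv.funUnique_symm_apply]
  rw [Fintype.sum_eq_single α]
  · rw [if_pos]
    · unfold chainTerm
      simp
    · refine ⟨fun i j h => absurd h (by omega), rfl, rfl⟩
  · intro x hx
    rw [if_neg]
    rintro ⟨-, h0, -⟩
    exact hx h0

lemma chainSum_of_not_le (f : C → C → ℝ) {α β : C} (h : ¬ α ≤ β) :
    chainSum f α β = 0 := by
  unfold chainSum
  refine Finset.sum_eq_zero fun s _ => Finset.sum_eq_zero fun c _ => ?_
  rw [if_neg]
  rintro ⟨hsm, h0, hl⟩
  exact h (h0 ▸ hl ▸ hsm.monotone (Fin.zero_le _))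

end Aux2

section Aux3
set_option linter.unusedSectionVars false

variable {C : Type*} [Fintype C] [PartialOrder C] [DecidableEq C]
  [DecidableRel (α := C) (· ≤ ·)] [DecidableRel (α := C) (· < ·)]

lemma peel_first (f : C → C → ℝ) (α β : C) (t : ℕ) :
    (∑ c : Fin (t + 1 + 1) → C,
        if StrictMono c ∧ c 0 = α ∧ c (Fin.last (t + 1)) = β then chainTerm f (t + 1) c
        else 0)
      = ∑ c : Fin (t + 1) → C,
          if StrictMono c ∧ α < c 0 ∧ c (Fin.last t) = β then
            -(f α (c 0) / f α α) * chainTerm f t c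
          else 0 := by
  rw [← (Fin.consEquiv (fun _ : Fin (t + 2) => C)).sum_comp]
  rw [Fintype.sum_prod_type]
  rw [Fintype.sum_eq_single α]
  · refine Finset.sum_congr rfl fun c _ => ?_
    simp only [Fin.consEquiv, Equiv.coe_fn_mk]
    rw [chainTerm_cons]
    congr 1
    · rw [eq_iff_iff]
      constructor
      · rintro ⟨hsm, -, hl⟩
        obtain ⟨h0, hsm'⟩ := strictMono_cons_iff.mp hsm
        refine ⟨hsm', h0, ?_⟩
        have : (Fin.last (t + 1)) = Fin.succ (Fin.last t) := by
          simp [Fin.succ_last]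
        rw [this, Fin.cons_succ] at hl
        exact hl
      · rintro ⟨hsm, h0, hl⟩
        refine ⟨strictMono_cons_iff.mpr ⟨h0, hsm⟩, by simp, ?_⟩
        have : (Fin.last (t + 1)) = Fin.succ (Fin.last t) := by
          simp [Fin.succ_last]
        rw [this, Fin.cons_succ]
        exact hl
  · intro x hx
    refine Finset.sum_eq_zero fun c _ => ?_
    rw [if_neg]
    simp only [Fin.consEquiv, Equiv.coe_fn_mk]
    rintro ⟨-, h0, -⟩
    rw [Fin.cons_zero] at h0
    exact hx h0

end Aux3

section Aux4
set_option linter.unusedSectionVars false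

variable {C : Type*} [Fintype C] [PartialOrder C] [DecidableEq C]
  [DecidableRel (α := C) (· ≤ ·)] [DecidableRel (α := C) (· < ·)]

lemma ite_sum {P : Prop} [Decidable P] {ι : Type*} {s : Finset ι} (f : ι → ℝ) :
    (if P then ∑ i ∈ s, f i else 0) = ∑ i ∈ s, if P then f i else 0 := by
  split_ifs <;> simp

lemma collapse (f : C → C → ℝ) (α β : C) (s : ℕ) :
    (∑ γ : C, if α < γ ∧ γ ≤ β then
        -(f α γ / f α α) *
          ∑ c : Fin (s + 1) → C,
            (if StrictMono c ∧ c 0 = γ ∧ c (Fin.last s) = β then chainTerm f s c else 0)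
      else 0)
    = ∑ c : Fin (s + 1) → C,
        if StrictMono c ∧ α < c 0 ∧ c (Fin.last s) = β then
          -(f α (c 0) / f α α) * chainTerm f s c
        else 0 := by
  trans (∑ γ : C, ∑ c : Fin (s + 1) → C,
      if (α < γ ∧ γ ≤ β) ∧ StrictMono c ∧ c 0 = γ ∧ c (Fin.last s) = β then
        -(f α γ / f α α) * chainTerm f s c
      else 0)
  · refine Finset.sum_congr rfl fun γ _ => ?_
    by_cases h1 : α < γ ∧ γ ≤ β
    · rw [if_pos h1, Finset.mul_sum]
      refine Finset.sum_congr rfl fun c _ => ?_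
      by_cases h2 : StrictMono c ∧ c 0 = γ ∧ c (Fin.last s) = β
      · rw [if_pos h2, if_pos ⟨h1, h2⟩]
      · rw [if_neg h2, if_neg fun h => h2 h.2, mul_zero]
    · rw [if_neg h1, eq_comm]
      exact Finset.sum_eq_zero fun c _ => if_neg fun h => h1 h.1
  · rw [Finset.sum_comm]
    refine Finset.sum_congr rfl fun c _ => ?_
    rw [Fintype.sum_eq_single (c 0)]
    · by_cases h : StrictMono c ∧ α < c 0 ∧ c (Fin.last s) = β
      · rw [if_pos, if_pos h]
        exact ⟨⟨h.2.1, h.2.2 ▸ h.1.monotone (Fin.zero_le _)⟩, h.1, rfl, h.2.2⟩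
      · rw [if_neg, if_neg h]
        rintro ⟨⟨ha, -⟩, hsm, -, hl⟩
        exact h ⟨hsm, ha, hl⟩
    · intro γ hγ
      exact if_neg fun h => hγ h.2.2.1.symm

lemma chainSum_rec (f : C → C → ℝ) {α β : C} (hne : α ≠ β) :
    chainSum f α β =
      ∑ γ ∈ Finset.univ.filter fun γ : C => α < γ ∧ γ ≤ β,
        -(f α γ / f α α) * chainSum f γ β := by
  obtain ⟨M, hN⟩ : ∃ M, Fintype.card C = M + 1 :=
    ⟨_, (Nat.succ_pred_eq_of_pos (Fintype.card_pos_iff.mpr ⟨α⟩)).symm⟩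
  -- RHS rewriting
  rw [Finset.sum_filter]
  have step : ∀ γ : C,
      (if α < γ ∧ γ ≤ β then -(f α γ / f α α) * chainSum f γ β else 0)
      = ∑ s ∈ Finset.range (M + 1),
          if α < γ ∧ γ ≤ β then
            -(f α γ / f α α) *
              ∑ c : Fin (s + 1) → C,
                (if StrictMono c ∧ c 0 = γ ∧ c (Fin.last s) = β then chainTerm f s c else 0)
          else 0 := by
    intro γ
    rw [show chainSum f γ β = ∑ s ∈ Finset.range (M + 1),
        ∑ c : Fin (s + 1) → C,
          (if StrictMono c ∧ c 0 = γ ∧ c (Fin.last s) = β then chainTerm f s c else 0) by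
      rw [chainSum, hN]]
    rw [Finset.mul_sum, ite_sum]
  rw [Finset.sum_congr rfl fun γ _ => step γ, Finset.sum_comm]
  rw [Finset.sum_congr rfl fun s _ => collapse f α β s]
  -- now RHS = ∑ s ∈ range (M+1), B s ; split off s = M
  rw [Finset.sum_range_succ]
  have hBM : (∑ c : Fin (M + 1) → C,
      if StrictMono c ∧ α < c 0 ∧ c (Fin.last M) = β then
        -(f α (c 0) / f α α) * chainTerm f M c
      else 0) = 0 := by
    refine Finset.sum_eq_zero fun c _ => ?_
    rw [if_neg]
    rintro ⟨hsm, h0, -⟩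
    have hmono : StrictMono (Fin.cons α c : Fin (M + 2) → C) :=
      strictMono_cons_iff.mpr ⟨h0, hsm⟩
    have := Fintype.card_le_of_injective _ hmono.injective
    rw [Fintype.card_fin, hN] at this
    omega
  rw [hBM, add_zero]
  -- LHS
  rw [chainSum, hN, Finset.sum_range_succ']
  have hA0 : (∑ c : Fin (0 + 1) → C,
      if StrictMono c ∧ c 0 = α ∧ c (Fin.last 0) = β then chainTerm f 0 c else 0) = 0 := by
    refine Finset.sum_eq_zero fun c _ => ?_
    rw [if_neg]
    rintro ⟨-, h0, hl⟩
    exact hne (h0 ▸ hl ▸ rfl)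
  rw [hA0, add_zero]
  exact Finset.sum_congr rfl fun t _ => peel_first f α β t

end Aux4

/-- For a function `f` in the incidence algebra of a finite poset with
`f(γ,γ) ≠ 0` for all `γ`, and `α ≤ β`, the inverse satisfies
`f⁻¹(α,β) = ∑ (-1)^{s-1} f(γ₁,γ₂)⋯f(γ_{s-1},γₛ) / (f(γ₁,γ₁)⋯f(γₛ,γₛ))`,
the sum being over all chains `α = γ₁ < γ₂ < ⋯ < γₛ = β`. -/
theorem incidence_inverse_chain_formula {C : Type*} [Fintype C] [PartialOrder C]
    [DecidableEq C] [DecidableRel (α := C) (· ≤ ·)] [DecidableRel (α := C) (· < ·)]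
    (f : C → C → ℝ) (hf : ∀ γ : C, f γ γ ≠ 0)
    (g : C → C → ℝ) (hg : IsIncidenceInverse (Finset.univ : Finset C) f g)
    (α β : C) (hab : α ≤ β) :
    g α β =
      ∑ s ∈ Finset.range (Fintype.card C),
        ∑ c : Fin (s + 1) → C,
          if StrictMono c ∧ c 0 = α ∧ c (Fin.last s) = β then
            (-1 : ℝ) ^ s * (∏ i : Fin s, f (c i.castSucc) (c i.succ)) /
              ∏ i, f (c i) (c i)
          else 0 := by
  have key : ∀ a : C, a ≤ β → g a β = chainSum f a β := by
    refine fun a => (wellFounded_gt (α := C)).induction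
      (C := fun a : C => a ≤ β → g a β = chainSum f a β) a ?_
    intro x IH hxβ
    rcases eq_or_lt_of_le hxβ with rfl | hlt
    · have hfilter : (Finset.univ.filter fun c : C => x ≤ c ∧ c ≤ x) = {x} := by
        ext c
        simp only [Finset.mem_filter, Finset.mem_univ, true_and, Finset.mem_singleton]
        constructor
        · rintro ⟨h1, h2⟩; exact le_antisymm h2 h1
        · rintro rfl; exact ⟨le_rfl, le_rfl⟩
      have h1 := hg.1 x (Finset.mem_univ x) x (Finset.mem_univ x)
      rw [hfilter, Finset.sum_singleton, if_pos rfl] at h1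
      rw [chainSum_diag, eq_div_iff (hf x), mul_comm]
      exact h1
    · have hne : x ≠ β := ne_of_lt hlt
      have h0 := hg.1 x (Finset.mem_univ x) β (Finset.mem_univ β)
      rw [if_neg hne] at h0
      have hx_mem : x ∈ Finset.univ.filter fun c : C => x ≤ c ∧ c ≤ β := by
        simp [hxβ]
      rw [Finset.sum_eq_sum_sdiff_singleton_add hx_mem] at h0
      have hdiff : (Finset.univ.filter fun c : C => x ≤ c ∧ c ≤ β) \ {x}
          = Finset.univ.filter fun c : C => x < c ∧ c ≤ β := by
        ext c
        simp only [Finset.mem_sdiff, Finset.mem_filter, Finset.mem_univ, true_and,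
          Finset.mem_singleton]
        constructor
        · rintro ⟨⟨h1, h2⟩, h3⟩; exact ⟨lt_of_le_of_ne h1 (Ne.symm h3), h2⟩
        · rintro ⟨h1, h2⟩; exact ⟨⟨le_of_lt h1, h2⟩, ne_of_gt h1⟩
      rw [hdiff] at h0
      rw [Finset.sum_congr rfl (fun c hc => by
        simp only [Finset.mem_filter, Finset.mem_univ, true_and] at hc
        rw [IH c hc.1 hc.2])] at h0
      rw [chainSum_rec f hne]
      have hrw : ∀ γ : C, -(f x γ / f x x) * chainSum f γ β
          = f x γ * chainSum f γ β * (-(f x x)⁻¹) := fun γ => by ring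
      rw [Finset.sum_congr rfl fun γ _ => hrw γ, ← Finset.sum_mul]
      have hS : (∑ γ ∈ Finset.univ.filter fun γ : C => x < γ ∧ γ ≤ β,
          f x γ * chainSum f γ β) = -(f x x * g x β) := by linarith [h0]
      rw [hS]
      have := hf x
      field_simp
  rw [key α hab]
  rfl

end Kassign
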